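/- A word w ∈ Σ* is accepted by the control-state automaton A_SR(l_in, l_mid, l_fin) for some middle state l_mid if and only if l_in can reach l_fin in the system by first executing all send actions σ₁(w) and then all receive actions σ₂(w), i.e., iff msc(w) takes the global state l_in to l_fin. -/
import Mathlib


/-- Send/receive actions of a communicating system. -/
inductive Act (P V : Type) where
  | send (p q : P) (m : V)
  | recv (p q : P) (m : V)
deriving DecidableEq

namespace Act
variable {P V : Type}

/-- The process performing the action: `p` for a send `s^{p -> q}`, `q` for a receive. -/
def proc : Act P V → P
  | send p _ _ => p
  | recv _ q _ => q

def sender : Act P V → P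
  | send p _ _ => p
  | recv p _ _ => p

def receiver : Act P V → P
  | send _ q _ => q
  | recv _ q _ => q

def isSend : Act P V → Bool
  | send _ _ _ => true
  | recv _ _ _ => false

def isRecv : Act P V → Bool
  | send _ _ _ => false
  | recv _ _ _ => true

end Act
/-- A communicating system: a finite family of automata, one per process. -/
structure System (P V : Type) where
  L : P → Type
  init : ∀ p, L p
  trans : ∀ p, L p → Act P V → L p → Prop

/-- Global control states. -/
abbrev GState {P V : Type} (S : System P V) := ∀ p, S.L p

/-- Global transition relation (product of the process automata). -/
def gstep {P V : Type} [DecidableEq P] (S : System P V) (g : GState S) (a : Act P V)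
    (g' : GState S) : Prop :=
  S.trans a.proc (g a.proc) a (g' a.proc) ∧ ∀ q, q ≠ a.proc → g' q = g q

def gsteps {P V : Type} [DecidableEq P] (S : System P V) :
    List (Act P V) → GState S → GState S → Prop
  | [], g, g' => g = g'
  | a :: e, g, g'' => ∃ g', gstep S g a g' ∧ gsteps S e g' g''

/-- A configuration: a global control state plus one FIFO buffer per process
(mailbox semantics). -/
abbrev Config {P V : Type} (S : System P V) := GState S × (P → List V)

/-- Mailbox semantics: a send appends the message to the buffer of the destination;
a receive pops the message from the head of the buffer of the receiver. -/
def mstep {P V : Type} [DecidableEq P] (S : System P V) (c : Config S) (a : Act P V)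
    (c' : Config S) : Prop :=
  gstep S c.1 a c'.1 ∧
  match a with
  | .send _ q m => c'.2 = Function.update c.2 q (c.2 q ++ [m])
  | .recv _ q m => ∃ rest, c.2 q = m :: rest ∧ c'.2 = Function.update c.2 q rest

def msteps {P V : Type} [DecidableEq P] (S : System P V) :
    List (Act P V) → Config S → Config S → Prop
  | [], c, c' => c = c'
  | a :: e, c, c'' => ∃ c', mstep S c a c' ∧ msteps S e c' c''

def initConfig {P V : Type} (S : System P V) : Config S := (S.init, fun _ => [])

/-- An execution of the system under the mailbox semantics. -/
def IsExecution {P V : Type} [DecidableEq P] (S : System P V) (e : List (Act P V)) : Prop :=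
  ∃ c, msteps S e (initConfig S) c
/-- A letter of the alphabet `Σ = {!?, !} × V × P²`: a matched (`matched = true`)
or unmatched send of message `msg` from `src` to `dst`. -/
structure Letter (P V : Type) where
  matched : Bool
  msg : V
  src : P
  dst : P

/-- `σ₁(w)`: the sequence of send actions of `w`. -/
def sendsOf {P V : Type} (w : List (Letter P V)) : List (Act P V) :=
  w.map fun a => Act.send a.src a.dst a.msg

/-- `σ₂(w)`: matched letters are replaced by the corresponding receive action,
unmatched letters by `ε`. -/
def recvsOf {P V : Type} (w : List (Letter P V)) : List (Act P V) :=
  w.filterMap fun a => if a.matched then some (Act.recv a.src a.dst a.msg) else none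
/-- A transition of the control-state automaton `A_SR`: on an unmatched letter only the
send component moves; on a matched letter the send component moves by the send
transition and the receive component by the matching receive transition. -/
def srStep {P V : Type} [DecidableEq P] (S : System P V) (st : GState S × GState S)
    (a : Letter P V) (st' : GState S × GState S) : Prop :=
  gstep S st.1 (Act.send a.src a.dst a.msg) st'.1 ∧
  (if a.matched then gstep S st.2 (Act.recv a.src a.dst a.msg) st'.2 else st'.2 = st.2)

def srSteps {P V : Type} [DecidableEq P] (S : System P V) :
    List (Letter P V) → GState S × GState S → GState S × GState S → Prop
  | [], st, st' => st = st'
  | a :: w, st, st'' => ∃ st', srStep S st a st' ∧ srSteps S w st' st''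

theorem srSteps_iff {P V : Type} [DecidableEq P] (S : System P V) :
    ∀ (w : List (Letter P V)) (g1 g2 g1' g2' : GState S),
    srSteps S w (g1, g2) (g1', g2') ↔
    gsteps S (sendsOf w) g1 g1' ∧ gsteps S (recvsOf w) g2 g2' := by
  intro w
  induction w with
  | nil =>
    intro g1 g2 g1' g2'
    simp [srSteps, sendsOf, recvsOf, gsteps, Prod.ext_iff]
  | cons a w ih =>
    intro g1 g2 g1' g2'
    by_cases hm : a.matched
    · constructor
      · rintro ⟨⟨h1, h2⟩, hstep, hrest⟩
        simp only [srStep, hm, if_true] at hstep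
        rw [ih] at hrest
        exact ⟨⟨h1, hstep.1, hrest.1⟩, by
          simp [recvsOf, hm, gsteps]
          exact ⟨h2, hstep.2, hrest.2⟩⟩
      · rintro ⟨⟨m1, hs1, hrest1⟩, hr⟩
        simp only [recvsOf, List.filterMap_cons, hm, if_true] at hr
        obtain ⟨m2, hs2, hrest2⟩ := hr
        exact ⟨(m1, m2), ⟨hs1, by simp [hm, hs2]⟩, (ih _ _ _ _).2 ⟨hrest1, hrest2⟩⟩
    · simp only [Bool.not_eq_true] at hm
      constructor
      · rintro ⟨⟨h1, h2⟩, hstep, hrest⟩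
        simp only [srStep, hm, Bool.false_eq_true, if_false] at hstep
        rw [ih] at hrest
        refine ⟨⟨h1, hstep.1, hrest.1⟩, ?_⟩
        simp only [recvsOf, List.filterMap_cons, hm]
        simpa [recvsOf, hstep.2] using hrest.2
      · rintro ⟨⟨m1, hs1, hrest1⟩, hr⟩
        simp only [recvsOf, List.filterMap_cons, hm] at hr
        exact ⟨(m1, g2), ⟨hs1, by simp [hm]⟩, (ih _ _ _ _).2 ⟨hrest1, hr⟩⟩

/-- A word `w` is accepted by `A_SR(l_in, l_mid, l_fin)` for some middle
state `l_mid` iff `l_in` reaches `l_fin` in the system by executing all the sends `σ₁(w)`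
followed by all the receives `σ₂(w)`, i.e. iff `msc(w)` takes `l_in` to `l_fin`. -/
theorem stmt5 {P V : Type} [DecidableEq P] (S : System P V) (w : List (Letter P V))
    (lin lfin : GState S) :
    (∃ lmid, srSteps S w (lin, lmid) (lmid, lfin)) ↔
    (∃ lmid, gsteps S (sendsOf w) lin lmid ∧ gsteps S (recvsOf w) lmid lfin) := by
  constructor
  · rintro ⟨lmid, h⟩
    exact ⟨lmid, (srSteps_iff S w lin lmid lmid lfin).1 h⟩
  · rintro ⟨lmid, h1, h2⟩
    exact ⟨lmid, (srSteps_iff S w lin lmid lmid lfin).2 ⟨h1, h2⟩⟩
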